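/- If X is Gamma-distributed with shape m and mean λ (PDF f(x) = (m/λ)^m x^{m−1} e^{−m x/λ}/Γ(m) on x ≥ 0), then E[log₂(1 + Ω X/δ²)] = (Ω/(δ² Γ(m) ln 2)) ∫₀^∞ Γ(m, m x/λ)/(1 + Ω x/δ²) dx. -/

import Mathlib

/-!
Since `log (1 + c x) = ∫₀ˣ c / (1 + c t) dt`, exchanging the order of integration (the layer
cake formula) gives `E[log (1 + c X)] = ∫₀^∞ c / (1 + c t) P(X > t) dt`. For the Gamma law the
substitution `u = m x / λ` turns the tail `P(X > t)` into `Γ(m, m t / λ) / Γ(m)`.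
-/

open MeasureTheory Set ProbabilityTheory Real

noncomputable def upperGamma (m y : ℝ) : ℝ := ∫ t in Set.Ioi y, t ^ (m - 1) * Real.exp (-t)

lemma integral_rpow_mul_exp_neg_mul_Ioi_eq_upperGamma (a : ℝ) {r t : ℝ} (hr : 0 < r)
    (ht : 0 ≤ t) :
    ∫ x in Ioi t, x ^ (a - 1) * exp (-(r * x)) = upperGamma a (r * t) / r ^ a := by
  have hsplit : ∀ x ∈ Ioi t, x ^ (a - 1) * exp (-(r * x))
      = (r ^ (a - 1))⁻¹ * ((r * x) ^ (a - 1) * exp (-(r * x))) := fun x hx => by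
    rw [mul_rpow hr.le (ht.trans (le_of_lt hx))]
    field_simp
  rw [setIntegral_congr_fun measurableSet_Ioi hsplit, integral_const_mul,
    integral_comp_mul_left_Ioi (fun u => u ^ (a - 1) * exp (-u)) t hr, smul_eq_mul, upperGamma,
    rpow_sub_one hr.ne']
  field_simp

lemma gammaMeasure_real_Ioi {a r t : ℝ} (ha : 0 < a) (hr : 0 < r) (ht : 0 ≤ t) :
    (gammaMeasure a r).real (Ioi t) = upperGamma a (r * t) / Gamma a := by
  have hpdf : ∀ x ∈ Ioi t,
      gammaPDFReal a r x = r ^ a / Gamma a * (x ^ (a - 1) * exp (-(r * x))) := fun x hx => by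
    rw [gammaPDFReal, if_pos (ht.trans (le_of_lt hx)), mul_assoc]
  rw [measureReal_def, gammaMeasure, withDensity_apply _ measurableSet_Ioi]
  simp only [gammaPDF]
  rw [← integral_eq_lintegral_of_nonneg_ae (ae_of_all _ (gammaPDFReal_nonneg ha hr))
      (measurable_gammaPDFReal a r).aestronglyMeasurable,
    setIntegral_congr_fun measurableSet_Ioi hpdf, integral_const_mul,
    integral_rpow_mul_exp_neg_mul_Ioi_eq_upperGamma a hr ht]
  field_simp [(rpow_pos_of_pos hr a).ne']

lemma ae_nonneg_gammaMeasure (a r : ℝ) : ∀ᵐ x ∂gammaMeasure a r, 0 ≤ x := by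
  simp only [ae_iff, not_le]
  exact (withDensity_apply _ measurableSet_Iio).trans (lintegral_gammaPDF_of_nonpos le_rfl)

-- Both sides are finite or infinite together, and in the infinite case both Bochner integrals
-- are `0`: no integrability hypothesis is needed.
theorem integral_comp_eq_integral_mul_measureReal_lt {α : Type*} [MeasurableSpace α]
    (μ : Measure α) [IsFiniteMeasure μ] {f : α → ℝ} (f_nn : 0 ≤ᵐ[μ] f)
    (f_mble : AEMeasurable f μ) {G g : ℝ → ℝ} (hG : ∀ x, 0 ≤ x → G x = ∫ t in 0..x, g t)
    (G_mble : Measurable G) (g_mble : Measurable g)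
    (g_intble : ∀ t > 0, IntervalIntegrable g volume 0 t) (g_nn : ∀ t ≥ 0, 0 ≤ g t) :
    ∫ ω, G (f ω) ∂μ = ∫ t in Ioi 0, g t * μ.real {ω | t < f ω} := by
  have hGf_nn : 0 ≤ᵐ[μ] fun ω => G (f ω) := by
    filter_upwards [f_nn] with ω (hω : 0 ≤ f ω)
    rw [hG _ hω]
    exact intervalIntegral.integral_nonneg hω fun t ht => g_nn t ht.1
  have htail_mble : Measurable fun t => μ.real {ω | t < f ω} :=
    Antitone.measurable fun _ _ hst => measureReal_mono fun _ h => lt_of_le_of_lt hst h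
  have hrhs_nn : 0 ≤ᵐ[volume.restrict (Ioi 0)] fun t => g t * μ.real {ω | t < f ω} := by
    filter_upwards [ae_restrict_mem measurableSet_Ioi] with t ht
    exact mul_nonneg (g_nn t (le_of_lt ht)) measureReal_nonneg
  rw [integral_eq_lintegral_of_nonneg_ae hGf_nn
      (G_mble.comp_aemeasurable f_mble).aestronglyMeasurable,
    integral_eq_lintegral_of_nonneg_ae hrhs_nn (g_mble.mul htail_mble).aestronglyMeasurable]
  congr 1
  calc ∫⁻ ω, ENNReal.ofReal (G (f ω)) ∂μ
      = ∫⁻ ω, ENNReal.ofReal (∫ t in 0..f ω, g t) ∂μ :=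
        lintegral_congr_ae (f_nn.mono fun ω (hω : 0 ≤ f ω) => by simp only [hG _ hω])
    _ = ∫⁻ t in Ioi 0, μ {ω | t < f ω} * ENNReal.ofReal (g t) :=
        lintegral_comp_eq_lintegral_meas_lt_mul μ f_nn f_mble g_intble
          ((ae_restrict_mem measurableSet_Ioi).mono fun t ht => g_nn t (le_of_lt ht))
    _ = ∫⁻ t in Ioi 0, ENNReal.ofReal (g t * μ.real {ω | t < f ω}) :=
        setLIntegral_congr_fun measurableSet_Ioi fun t ht => by
          rw [ENNReal.ofReal_mul (g_nn t (le_of_lt ht)), ofReal_measureReal, mul_comm]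

lemma log_one_add_mul_eq_intervalIntegral {c x : ℝ} (hc : 0 ≤ c) (hx : 0 ≤ x) :
    log (1 + c * x) = ∫ t in 0..x, c / (1 + c * t) := by
  have hpos : ∀ t ∈ uIcc 0 x, 0 < 1 + c * t := fun t ht => by
    rw [uIcc_of_le hx] at ht
    nlinarith [ht.1]
  have hderiv : ∀ t ∈ uIcc 0 x, HasDerivAt (fun u => log (1 + c * u)) (c / (1 + c * t)) t :=
    fun t ht => by
      simpa using (((hasDerivAt_id t).const_mul c).const_add 1).log (hpos t ht).ne'
  have hcont : ContinuousOn (fun t => c / (1 + c * t)) (uIcc 0 x) :=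
    continuousOn_const.div (by fun_prop) fun t ht => (hpos t ht).ne'
  rw [intervalIntegral.integral_eq_sub_of_hasDerivAt hderiv hcont.intervalIntegrable]
  simp

theorem integral_log_one_add_mul_eq_integral_mul_measureReal_lt {α : Type*}
    [MeasurableSpace α] (μ : Measure α) [IsFiniteMeasure μ] {f : α → ℝ} (f_nn : 0 ≤ᵐ[μ] f)
    (f_mble : AEMeasurable f μ) {c : ℝ} (hc : 0 ≤ c) :
    ∫ ω, log (1 + c * f ω) ∂μ = ∫ t in Ioi 0, c / (1 + c * t) * μ.real {ω | t < f ω} := by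
  have hpos : ∀ t ≥ 0, 0 < 1 + c * t := fun t ht => by positivity
  refine integral_comp_eq_integral_mul_measureReal_lt μ f_nn f_mble
    (fun x hx => log_one_add_mul_eq_intervalIntegral hc hx) (by fun_prop) (by fun_prop)
    (fun t ht => ?_) fun t ht => div_nonneg hc (hpos t ht).le
  refine ContinuousOn.intervalIntegrable (continuousOn_const.div (by fun_prop) fun u hu => ?_)
  rw [uIcc_of_le ht.le] at hu
  exact (hpos u hu.1).ne'

theorem stmt4_general {α : Type*} [MeasurableSpace α] (μ : Measure α) [IsProbabilityMeasure μ]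
    (m lam Om d : ℝ) (hm : 0 < m) (hlam : 0 < lam) (hOm : 0 < Om) (hd : 0 < d)
    (X : α → ℝ) (hX : Measurable X)
    (hlaw : μ.map X = volume.withDensity (fun x =>
      ENNReal.ofReal (if 0 ≤ x then
        (m / lam) ^ m * x ^ (m - 1) * Real.exp (-(m * x / lam)) / Real.Gamma m else 0))) :
    ∫ ω, Real.logb 2 (1 + Om * X ω / d) ∂μ
      = (Om / (d * Real.Gamma m * Real.log 2)) *
        ∫ x in Set.Ioi (0:ℝ), upperGamma m (m * x / lam) / (1 + Om * x / d) := by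
  have hgamma : μ.map X = gammaMeasure m (m / lam) := by
    rw [hlaw, gammaMeasure]
    congr with x
    rw [gammaPDF_eq, mul_comm (m / lam) x, mul_div_assoc', mul_comm x m]
    congr 2
    ring
  have hX_nn : ∀ᵐ ω ∂μ, 0 ≤ X ω :=
    ae_of_ae_map hX.aemeasurable (hgamma ▸ ae_nonneg_gammaMeasure m (m / lam))
  have htail : ∀ t ∈ Ioi (0 : ℝ),
      μ.real {ω | t < X ω} = upperGamma m (m / lam * t) / Gamma m := fun t ht => by
    rw [← gammaMeasure_real_Ioi hm (div_pos hm hlam) (le_of_lt ht), ← hgamma,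
      map_measureReal_apply hX measurableSet_Ioi]
    rfl
  simp_rw [logb, mul_div_right_comm Om, mul_div_right_comm m]
  rw [integral_div, integral_log_one_add_mul_eq_integral_mul_measureReal_lt μ hX_nn
      hX.aemeasurable (div_pos hOm hd).le,
    setIntegral_congr_fun measurableSet_Ioi fun t ht => by rw [htail t ht],
    ← integral_div (log 2), ← integral_const_mul]
  congr 1 with x
  ring

/-- If `X` is Gamma-distributed with shape `m` and mean `λ`
(PDF `f(x) = (m/λ)^m x^{m−1} e^{−m x/λ}/Γ(m)` on `x ≥ 0`), then
`E[log₂(1 + Ω X/δ²)] = (Ω/(δ² Γ(m) ln 2)) ∫₀^∞ Γ(m, m x/λ)/(1 + Ω x/δ²) dx`. -/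
theorem stmt4 {α : Type*} [MeasurableSpace α] (μ : Measure α) [IsProbabilityMeasure μ]
    (m lam Om d : ℝ) (hm : 0 < m) (hlam : 0 < lam) (hOm : 0 < Om) (hd : 0 < d)
    (X : α → ℝ) (hX : Measurable X)
    (hlaw : μ.map X = volume.withDensity (fun x =>
      ENNReal.ofReal (if 0 ≤ x then
        (m / lam) ^ m * x ^ (m - 1) * Real.exp (-(m * x / lam)) / Real.Gamma m else 0)))
    (hint : Integrable (fun ω => Real.logb 2 (1 + Om * X ω / d)) μ) :
    ∫ ω, Real.logb 2 (1 + Om * X ω / d) ∂μ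
      = (Om / (d * Real.Gamma m * Real.log 2)) *
        ∫ x in Set.Ioi (0:ℝ), upperGamma m (m * x / lam) / (1 + Om * x / d) :=
  stmt4_general μ m lam Om d hm hlam hOm hd X hX hlaw
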